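/- arXiv:hep-th/0203128 — 3 statements merged into one kernel-verified Lean document; each statement's English description precedes it below -/
import Mathlib

section
/- As formal power series in q, (1/2)·(∏_{n≥1} 1/(1−q^n) + ∏_{n≥1} 1/(1+q^n)) = (∑_{m≥0} (−1)^m q^{m²}) · ∏_{n≥1} 1/(1−q^n). -/
/-!
Clearing denominators, the identity says `∏ (1 - q^i) / (1 + q^i) = 2 ∑_{m ≥ 0} (-1)^m q^(m²) - 1`.
This is Gauss's identity, the Jacobi triple product at `z = -1`, since
`(q; q)_∞ / (-q; q)_∞ = (q; q²)_∞² (q²; q²)_∞`. The `q`-binomial theorem gives the finite form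
`(q; q²)_n ² = ∑_j (-1)^|n-j| q^((n-j)²) [2n choose j]_{q²}`. Since `(q; q)_b ≡ (q; q)_a` modulo
`q^(a+1)` for `a ≤ b`, each `[2n choose j]_{q²} (q²; q²)_n` is `≡ 1` modulo `q^(n - (n-j)²)`,
and `(q; q²)_n (q²; q²)_n = (q; q)_{2n} ≡ (q; q)_n`; together these give Gauss's identity
modulo `q^n`.
-/

open PowerSeries Finset

namespace QSeries

variable {R : Type*} [CommRing R]

/-- The `q`-Pochhammer symbol `(q; q)_n`. -/
def qPoch (q : R) (n : ℕ) : R := ∏ i ∈ range n, (1 - q ^ (i + 1))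

def qChoose (q : R) : ℕ → ℕ → R
  | _, 0 => 1
  | 0, _ + 1 => 0
  | m + 1, j + 1 => qChoose q m j + q ^ (j + 1) * qChoose q m (j + 1)

@[simp] lemma qChoose_zero_right (q : R) (m : ℕ) : qChoose q m 0 = 1 := by cases m <;> rfl

lemma qChoose_succ_succ (q : R) (m j : ℕ) :
    qChoose q (m + 1) (j + 1) = qChoose q m j + q ^ (j + 1) * qChoose q m (j + 1) := rfl

lemma qChoose_eq_zero_of_lt (q : R) {m j : ℕ} (h : m < j) : qChoose q m j = 0 := by
  induction m generalizing j with
  | zero => obtain ⟨j, rfl⟩ := Nat.exists_eq_add_one.2 h; rfl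
  | succ m ih =>
    obtain ⟨j, rfl⟩ := Nat.exists_eq_add_one.2 (Nat.zero_lt_of_lt h)
    rw [qChoose_succ_succ, ih (by omega), ih (by omega), mul_zero, add_zero]

@[simp] lemma qChoose_self (q : R) (m : ℕ) : qChoose q m m = 1 := by
  induction m with
  | zero => rfl
  | succ m ih => rw [qChoose_succ_succ, ih, qChoose_eq_zero_of_lt q (Nat.lt_succ_self m), mul_zero,
      add_zero]

lemma qPoch_succ (q : R) (n : ℕ) : qPoch q (n + 1) = qPoch q n * (1 - q ^ (n + 1)) :=
  prod_range_succ _ n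

lemma qChoose_mul_qPoch_mul_qPoch (q : R) (j k : ℕ) :
    qChoose q (j + k) j * (qPoch q j * qPoch q k) = qPoch q (j + k) := by
  induction k generalizing j with
  | zero => simp [qPoch]
  | succ k ihk =>
    induction j with
    | zero => simp [qPoch]
    | succ j ihj =>
      have ihk' := ihk (j + 1)
      rw [show j + 1 + k = j + k + 1 by ring, qPoch_succ q j] at ihk'
      rw [← add_assoc, qPoch_succ q k] at ihj
      rw [show j + 1 + (k + 1) = j + k + 1 + 1 by ring, qChoose_succ_succ, qPoch_succ q (j + k + 1),
        qPoch_succ q j, qPoch_succ q k]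
      linear_combination (1 - q ^ (j + 1)) * ihj + q ^ (j + 1) * (1 - q ^ (k + 1)) * ihk'

/-- The `q`-binomial theorem. -/
theorem prod_add_mul_pow_eq_sum (q x y : R) (m : ℕ) :
    ∏ i ∈ range m, (y + x * q ^ i) =
      ∑ j ∈ range (m + 1), q ^ j.choose 2 * qChoose q m j * x ^ j * y ^ (m - j) := by
  induction m generalizing x with
  | zero => simp
  | succ m ih =>
    set f : ℕ → R := fun j ↦ q ^ j.choose 2 * qChoose q m j * (x * q) ^ j * y ^ (m - j) with hf
    have hterm : ∀ j ∈ range (m + 1), q ^ (j + 1).choose 2 * qChoose q (m + 1) (j + 1) *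
        x ^ (j + 1) * y ^ (m + 1 - (j + 1)) = x * f j + y * f (j + 1) := by
      intro j hj
      have hc : (j + 1).choose 2 = j.choose 2 + j := by simp [Nat.choose_succ_succ, add_comm]
      simp only [hf, hc, qChoose_succ_succ]
      rcases Nat.lt_or_ge j m with hjm | hjm
      · obtain ⟨d, rfl⟩ := Nat.exists_eq_add_of_lt hjm
        simp only [show j + d + 1 + 1 - (j + 1) = d + 1 by omega,
          show j + d + 1 - j = d + 1 by omega, show j + d + 1 - (j + 1) = d by omega]
        ring
      · obtain rfl : j = m := by have := mem_range.1 hj; omega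
        simp only [qChoose_eq_zero_of_lt q (Nat.lt_succ_self j), Nat.sub_self]
        ring
    have hshift : ∑ i ∈ range (m + 1), f (i + 1) + f 0 = ∑ i ∈ range (m + 1), f i + f (m + 1) :=
      (sum_range_succ' f (m + 1)).symm.trans (sum_range_succ f (m + 1))
    have hlast : f (m + 1) = 0 := by simp [hf, qChoose_eq_zero_of_lt q (Nat.lt_succ_self m)]
    have hfirst : f 0 = y ^ m := by simp [hf]
    have hprod : ∏ i ∈ range m, (y + x * q ^ (i + 1)) = ∑ i ∈ range (m + 1), f i := by
      rw [← ih (x * q)]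
      exact prod_congr rfl fun i _ ↦ by ring
    rw [prod_range_succ', sum_range_succ', sum_congr rfl hterm, sum_add_distrib, ← mul_sum,
      ← mul_sum, hprod]
    simp only [Nat.choose_zero_succ, pow_zero, qChoose_zero_right, mul_one, Nat.sub_zero, one_mul]
    linear_combination (-y) * hshift - y * hlast + y * hfirst

/-- The `q`-Pochhammer symbol `(q; q²)_n`. -/
def qPochOdd (q : R) (n : ℕ) : R := ∏ i ∈ range n, (1 - q ^ (2 * i + 1))

lemma sum_range_two_mul_add_one (n : ℕ) : ∑ i ∈ range n, (2 * i + 1) = n ^ 2 := by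
  induction n with
  | zero => rfl
  | succ n ih => rw [sum_range_succ, ih]; ring

lemma prod_range_two_mul_pow_sub_pow (q : R) (n : ℕ) :
    ∏ i ∈ range (2 * n), (q ^ (2 * n) - q ^ (2 * i + 1)) =
      (-1) ^ n * q ^ (3 * n ^ 2) * qPochOdd q n ^ 2 := by
  have hlow : ∏ i ∈ range n, (q ^ (2 * n) - q ^ (2 * i + 1)) =
      (-1) ^ n * q ^ (n ^ 2) * qPochOdd q n := by
    have hfactor : ∀ i ∈ range n, q ^ (2 * n) - q ^ (2 * i + 1) =
        -1 * q ^ (2 * i + 1) * (1 - q ^ (2 * (n - 1 - i) + 1)) := by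
      intro i hi
      rw [show 2 * n = 2 * i + 1 + (2 * (n - 1 - i) + 1) by have := mem_range.1 hi; omega, pow_add]
      ring
    rw [prod_congr rfl hfactor, prod_mul_distrib, qPochOdd,
      ← prod_range_reflect (fun i ↦ 1 - q ^ (2 * i + 1))]
    simp only [prod_mul_distrib, prod_const, card_range, prod_pow_eq_pow_sum,
      sum_range_two_mul_add_one]
  have hhigh : ∏ i ∈ range n, (q ^ (2 * n) - q ^ (2 * (n + i) + 1)) =
      q ^ (2 * n ^ 2) * qPochOdd q n := by
    have hfactor : ∀ i ∈ range n, q ^ (2 * n) - q ^ (2 * (n + i) + 1) =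
        q ^ (2 * n) * (1 - q ^ (2 * i + 1)) := fun i _ ↦ by
      rw [show 2 * (n + i) + 1 = 2 * n + (2 * i + 1) by ring, pow_add]; ring
    rw [prod_congr rfl hfactor, prod_mul_distrib, prod_const, card_range, ← pow_mul, qPochOdd]
    ring_nf
  rw [show range (2 * n) = range (n + n) by rw [two_mul], prod_range_add, hlow, hhigh]
  ring

lemma neg_one_pow_mul_neg_one_pow_dist {M : Type*} [Monoid M] [HasDistribNeg M] (n j : ℕ) :
    (-1 : M) ^ n * (-1) ^ n.dist j = (-1) ^ j := by
  rw [← pow_add, show n + n.dist j = j + 2 * (n - j) by unfold Nat.dist; omega, pow_add, pow_mul,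
    neg_one_sq, one_pow, mul_one]

lemma two_mul_choose_two_add_eq (n j : ℕ) (hj : j ≤ 2 * n) :
    2 * j.choose 2 + j + 2 * n * (2 * n - j) = 3 * n ^ 2 + n.dist j ^ 2 := by
  have h2 : 2 * j.choose 2 + j = j ^ 2 := by
    rw [Nat.choose_two_right, Nat.mul_div_cancel' (Nat.even_mul_pred_self j).two_dvd]
    cases j <;> simp; ring
  rw [h2]
  rcases le_total j n with h | h
  · rw [Nat.dist_eq_sub_of_le_right h]
    zify [h, hj]; ring
  · rw [Nat.dist_eq_sub_of_le h]
    zify [h, hj]; ring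

/-- The Jacobi triple product identity, truncated and specialised at `z = -1`. -/
theorem qPochOdd_sq [IsDomain R] {q : R} (hq : q ≠ 0) (n : ℕ) :
    qPochOdd q n ^ 2 = ∑ j ∈ range (2 * n + 1),
      (-1) ^ n.dist j * q ^ n.dist j ^ 2 * qChoose (q ^ 2) (2 * n) j := by
  have hcancel : (-1) ^ n * q ^ (3 * n ^ 2) ≠ (0 : R) :=
    mul_ne_zero (pow_ne_zero _ (neg_ne_zero.2 one_ne_zero)) (pow_ne_zero _ hq)
  refine mul_left_cancel₀ hcancel ?_
  have hbinom := prod_add_mul_pow_eq_sum (q ^ 2) (-q) (q ^ (2 * n)) (2 * n)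
  rw [← prod_range_two_mul_pow_sub_pow, mul_sum]
  rw [prod_congr rfl fun i _ ↦ by rw [← pow_mul, neg_mul, ← pow_succ', ← sub_eq_add_neg]] at hbinom
  rw [hbinom]
  refine sum_congr rfl fun j hj ↦ ?_
  calc (q ^ 2) ^ j.choose 2 * qChoose (q ^ 2) (2 * n) j * (-q) ^ j * (q ^ (2 * n)) ^ (2 * n - j)
      = (-1) ^ j * q ^ (2 * j.choose 2 + j + 2 * n * (2 * n - j)) * qChoose (q ^ 2) (2 * n) j := by
        rw [neg_pow, pow_add, pow_add, pow_mul, pow_mul]; ring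
    _ = _ := by
        rw [two_mul_choose_two_add_eq n j (by have := mem_range.1 hj; omega),
          ← neg_one_pow_mul_neg_one_pow_dist n j, pow_add]
        ring

lemma dvd_prod_sub_prod {ι : Type*} {d : R} {s : Finset ι} {f g : ι → R}
    (h : ∀ i ∈ s, d ∣ f i - g i) : d ∣ ∏ i ∈ s, f i - ∏ i ∈ s, g i := by
  simp only [← Ideal.mem_span_singleton, ← Ideal.Quotient.eq, map_prod] at h ⊢
  exact prod_congr rfl h

lemma pow_succ_dvd_qPoch_sub_qPoch (q : R) {a b : ℕ} (h : a ≤ b) :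
    q ^ (a + 1) ∣ qPoch q b - qPoch q a := by
  obtain ⟨k, rfl⟩ := Nat.exists_eq_add_of_le h
  have htail : q ^ (a + 1) ∣ ∏ i ∈ range k, (1 - q ^ (a + i + 1)) - ∏ _i ∈ range k, (1 : R) :=
    dvd_prod_sub_prod fun i _ ↦ ⟨-q ^ i, by ring⟩
  rw [prod_const_one] at htail
  rw [qPoch, qPoch, prod_range_add, ← mul_sub_one]
  exact dvd_mul_of_dvd_right htail _

lemma pow_dvd_qChoose_mul_qPoch_sub_one (q : R) {j k t : ℕ} (ht : min j k ≤ t)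
    (hu : IsUnit (qPoch q (j + k))) :
    q ^ (min j k + 1) ∣ qChoose q (j + k) j * qPoch q t - 1 := by
  set mk := Ideal.Quotient.mk (Ideal.span {q ^ (min j k + 1)})
  have hstable : ∀ b, min j k ≤ b → mk (qPoch q b) = mk (qPoch q (min j k)) := fun b hb ↦
    Ideal.Quotient.eq.2 (Ideal.mem_span_singleton.2 (pow_succ_dvd_qPoch_sub_qPoch q hb))
  have hc := qChoose_mul_qPoch_mul_qPoch q j k
  have hunit : IsUnit (mk (qPoch q j * qPoch q k)) :=
    (isUnit_of_mul_isUnit_right (hc.symm ▸ hu)).map mk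
  rw [← Ideal.mem_span_singleton, ← Ideal.Quotient.eq_zero_iff_mem, ← hunit.mul_left_eq_zero]
  -- all four `q`-Pochhammer symbols are `≡ (q; q)_{min j k}`
  calc mk (qChoose q (j + k) j * qPoch q t - 1) * mk (qPoch q j * qPoch q k)
      = mk (qPoch q (j + k)) * mk (qPoch q t) - mk (qPoch q j) * mk (qPoch q k) := by
        rw [← hc]; simp only [map_mul, map_sub, map_one]; ring
    _ = 0 := by
        rw [hstable t ht, hstable (j + k) (by omega), hstable j (min_le_left j k),
          hstable k (min_le_right j k), sub_self]

lemma sum_range_dist_add {M : Type*} [AddCommMonoid M] (g : ℕ → M) (n : ℕ) :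
    ∑ j ∈ range (2 * n + 1), g (n.dist j) + g 0 =
      ∑ m ∈ range (n + 1), g m + ∑ m ∈ range (n + 1), g m := by
  have hlow : ∀ j ∈ range n, g (n.dist (n - 1 - j)) = g (j + 1) := fun j hj ↦ by
    have := mem_range.1 hj
    rw [Nat.dist_eq_sub_of_le_right (by omega), show n - (n - 1 - j) = j + 1 by omega]
  have hhigh : ∀ i ∈ range (n + 1), g (n.dist (n + i)) = g i := fun i _ ↦ by
    rw [Nat.dist_eq_sub_of_le (by omega), Nat.add_sub_cancel_left]
  rw [show 2 * n + 1 = n + (n + 1) by ring, sum_range_add, ← sum_range_reflect, sum_congr rfl hlow,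
    sum_congr rfl hhigh, add_right_comm, ← sum_range_succ']

lemma sum_range_dist_neg_one_pow_mul_pow_sq (q : R) (n : ℕ) :
    ∑ j ∈ range (2 * n + 1), (-1) ^ n.dist j * q ^ n.dist j ^ 2 =
      2 * ∑ m ∈ range (n + 1), (-1) ^ m * q ^ m ^ 2 - 1 := by
  have h := sum_range_dist_add (fun m ↦ (-1) ^ m * q ^ m ^ 2) n
  simp only [pow_zero, ne_eq, OfNat.ofNat_ne_zero, not_false_eq_true, zero_pow, one_mul,
    ← two_mul] at h
  exact eq_sub_of_add_eq h

lemma qPoch_mul_prod_one_add (q : R) (n : ℕ) :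
    qPoch q n * ∏ i ∈ range n, (1 + q ^ (i + 1)) = qPoch (q ^ 2) n := by
  rw [qPoch, qPoch, ← prod_mul_distrib]
  exact prod_congr rfl fun i _ ↦ by ring

lemma qPochOdd_mul_qPoch_sq (q : R) (n : ℕ) : qPochOdd q n * qPoch (q ^ 2) n = qPoch q (2 * n) := by
  induction n with
  | zero => simp [qPochOdd, qPoch]
  | succ n ih =>
    rw [qPochOdd, prod_range_succ, ← qPochOdd, qPoch_succ, show 2 * (n + 1) = 2 * n + 1 + 1 by ring,
      qPoch_succ, qPoch_succ, ← ih]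
    ring

lemma isUnit_qPoch {φ : R⟦X⟧} (hφ : constantCoeff φ = 0) (n : ℕ) : IsUnit (qPoch φ n) := by
  rw [isUnit_iff_constantCoeff, qPoch, map_prod]
  simp [hφ]

lemma X_pow_dvd_qPochOdd_sq_mul_qPoch_sub [IsDomain R] (n : ℕ) :
    (X : R⟦X⟧) ^ n ∣ qPochOdd X n ^ 2 * qPoch (X ^ 2) n -
      ∑ j ∈ range (2 * n + 1), (-1) ^ n.dist j * X ^ n.dist j ^ 2 := by
  rw [qPochOdd_sq X_ne_zero, sum_mul, ← sum_sub_distrib]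
  refine dvd_sum fun j hj ↦ ?_
  have hj : j ≤ 2 * n := by have := mem_range.1 hj; omega
  rw [mul_assoc _ (qChoose _ _ _), ← mul_sub_one, mul_assoc]
  refine dvd_mul_of_dvd_right ?_ _
  rcases le_total n (n.dist j ^ 2) with h | h
  · exact dvd_mul_of_dvd_left (pow_dvd_pow _ h) _
  rw [← pow_mul_pow_sub _ h]
  refine mul_dvd_mul_left _ ?_
  have hbinom := pow_dvd_qChoose_mul_qPoch_sub_one (X ^ 2 : R⟦X⟧) (j := j) (k := 2 * n - j) (t := n)
    (by omega) (isUnit_qPoch (by simp) _)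
  rw [Nat.add_sub_cancel' hj, ← pow_mul] at hbinom
  refine dvd_trans (pow_dvd_pow _ ?_) hbinom
  have := Nat.le_self_pow two_ne_zero (n.dist j)
  unfold Nat.dist at *
  omega

/-- Gauss's identity `∏ (1 - q^i) / (1 + q^i) = ∑_{m ∈ ℤ} (-1)^m q^(m²)`, modulo `X ^ n`. -/
theorem X_pow_dvd_qPoch_sub_theta_mul [IsDomain R] (n : ℕ) :
    (X : R⟦X⟧) ^ n ∣ qPoch X n -
      (2 * ∑ m ∈ range n, (-1) ^ m * X ^ m ^ 2 - 1) * ∏ i ∈ range n, (1 + X ^ (i + 1)) := by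
  set E := qPochOdd (X : R⟦X⟧) n
  set A := qPoch (X : R⟦X⟧) n
  set B := ∏ i ∈ range n, (1 + (X : R⟦X⟧) ^ (i + 1))
  have hAB : A * B = qPoch (X ^ 2) n := qPoch_mul_prod_one_add X n
  obtain ⟨c, hc⟩ : (X : R⟦X⟧) ^ n ∣ E * (A * B) - A := by
    rw [hAB, qPochOdd_mul_qPoch_sq]
    exact (pow_dvd_pow X n.le_succ).trans (pow_succ_dvd_qPoch_sub_qPoch X (by omega))
  obtain ⟨d, hd⟩ := X_pow_dvd_qPochOdd_sq_mul_qPoch_sub (R := R) n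
  rw [sum_range_dist_neg_one_pow_mul_pow_sq, sum_range_succ, ← hAB] at hd
  obtain ⟨e, he⟩ : (X : R⟦X⟧) ^ n ∣ X ^ n ^ 2 := pow_dvd_pow X (Nat.le_self_pow two_ne_zero n)
  exact ⟨B * d - c * (1 + E * B) + 2 * (-1) ^ n * e * B,
    by linear_combination (-(1 + E * B)) * hc + B * hd + 2 * (-1) ^ n * B * he⟩

lemma prod_mul_prod_inv {k ι : Type*} [Field k] {s : Finset ι} {f : ι → k⟦X⟧}
    (hf : ∀ i ∈ s, constantCoeff (f i) ≠ 0) : (∏ i ∈ s, f i) * ∏ i ∈ s, (f i)⁻¹ = 1 := by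
  rw [← prod_mul_distrib]
  exact prod_eq_one fun i hi ↦ PowerSeries.mul_inv_cancel _ (hf i hi)

end QSeries

/-- As formal power series in `q`,
`(1/2)·(∏_{n≥1} 1/(1−q^n) + ∏_{n≥1} 1/(1+q^n)) = (∑_{m≥0} (−1)^m q^{m²})·∏_{n≥1} 1/(1−q^n)`.
Stated coefficient-wise: the partial products/sums stabilize, since omitted factors are
`1 + O(q^{N+1})` and omitted summands have order `> N`. -/
theorem even_projector_trace (N : ℕ) :
    PowerSeries.coeff (R := ℚ) N
      ((PowerSeries.C (R := ℚ) (1 / 2)) *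
        (∏ n ∈ Finset.range (N + 1), (1 - (PowerSeries.X : PowerSeries ℚ) ^ (n + 1))⁻¹ +
         ∏ n ∈ Finset.range (N + 1), (1 + (PowerSeries.X : PowerSeries ℚ) ^ (n + 1))⁻¹)) =
    PowerSeries.coeff (R := ℚ) N
      ((∑ m ∈ Finset.range (N + 1), (-1 : PowerSeries ℚ) ^ m * PowerSeries.X ^ (m ^ 2)) *
        ∏ n ∈ Finset.range (N + 1), (1 - (PowerSeries.X : PowerSeries ℚ) ^ (n + 1))⁻¹) := by
  set S := ∑ m ∈ range (N + 1), (-1 : ℚ⟦X⟧) ^ m * X ^ m ^ 2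
  set A := ∏ n ∈ range (N + 1), (1 - (X : ℚ⟦X⟧) ^ (n + 1))
  set B := ∏ n ∈ range (N + 1), (1 + (X : ℚ⟦X⟧) ^ (n + 1))
  set a := ∏ n ∈ range (N + 1), (1 - (X : ℚ⟦X⟧) ^ (n + 1))⁻¹
  set b := ∏ n ∈ range (N + 1), (1 + (X : ℚ⟦X⟧) ^ (n + 1))⁻¹
  have hA : A * a = 1 := QSeries.prod_mul_prod_inv (by simp)
  have hB : B * b = 1 := QSeries.prod_mul_prod_inv (by simp)
  have hhalf : C (1 / 2 : ℚ) * 2 = 1 := by rw [← map_ofNat C 2, ← map_mul]; norm_num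
  obtain ⟨c, hc⟩ : X ^ (N + 1) ∣ A - (2 * S - 1) * B :=
    QSeries.X_pow_dvd_qPoch_sub_theta_mul (N + 1)
  rw [← sub_eq_zero, ← map_sub]
  refine X_pow_dvd_iff.1 ⟨a * b * C (1 / 2) * c, ?_⟩ N (Nat.lt_add_one N)
  linear_combination a * b * C (1 / 2 : ℚ) * hc - C (1 / 2 : ℚ) * b * hA +
    C (1 / 2 : ℚ) * (2 * S - 1) * a * hB + S * a * hhalf
end

section
/- As formal power series in q, (1/2)·(∏_{n≥1} 1/(1−q^n) − ∏_{n≥1} 1/(1+q^n)) = (∑_{m≥1} (−1)^{m−1} q^{m²}) · ∏_{n≥1} 1/(1−q^n). -/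
/-!
Doubling `1/(q;q)_∞ - 1/(-q;q)_∞` turns the claim into Gauss's identity
`(q;q)_∞ / (-q;q)_∞ = ∑_{j ∈ ℤ} (-1)^j q^{j²}`, which we get from its finite form
`∑_{|j| ≤ n} (-1)^j q^{j²} [2n, n+j]_q = (q;q²)_n` (both sides satisfy the recurrence
`S_{n+1} = (1 - q^{2n+1}) S_n`, by the two `q`-Pascal rules). Multiplying the finite form by
`(q;q)_n²` and using `[2n, n+j]_q (q;q)_{n+j} (q;q)_{n-j} = (q;q)_{2n} = (q;q²)_n (q;q)_n (-q;q)_n`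
together with `(q;q)_a ≡ (q;q)_b mod q^{min a b + 1}` and `j² ≥ |j|` gives
`(q;q)_n ≡ (∑_{|j| ≤ n} (-1)^j q^{j²}) (-q;q)_n mod q^{n+1}`, which is all the coefficientwise
statement needs.
-/

open PowerSeries Finset

section IntervalSums

variable {M : Type*} [AddCommMonoid M]

lemma sum_Icc_eq_of_vanish {f : ℤ → M} {a b c d : ℤ}
    (hf : ∀ j ∉ Icc a b, f j = 0) (hc : c ≤ a) (hd : b ≤ d) :
    ∑ j ∈ Icc c d, f j = ∑ j ∈ Icc a b, f j :=
  (sum_subset (Icc_subset_Icc hc hd) fun j _ hj ↦ hf j hj).symm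

lemma sum_Icc_comp_add (f : ℤ → M) (a b s : ℤ) :
    ∑ j ∈ Icc a b, f (j + s) = ∑ j ∈ Icc (a + s) (b + s), f j := by
  rw [← map_add_right_Icc, sum_map]
  rfl

lemma sum_Icc_comp_sub (f : ℤ → M) (a b s : ℤ) :
    ∑ j ∈ Icc a b, f (j - s) = ∑ j ∈ Icc (a - s) (b - s), f j := by
  simp only [sub_eq_add_neg, sum_Icc_comp_add]

end IntervalSums

section QAnalogues

variable {A : Type*} [CommRing A]

/-- `(a;q)_n`. -/
def qPochhammer (a q : A) (n : ℕ) : A := ∏ i ∈ range n, (1 - a * q ^ i)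

@[simp]
lemma qPochhammer_zero (a q : A) : qPochhammer a q 0 = 1 := rfl

lemma qPochhammer_succ (a q : A) (n : ℕ) :
    qPochhammer a q (n + 1) = qPochhammer a q n * (1 - a * q ^ n) :=
  prod_range_succ _ _

lemma qPochhammer_two_mul (a q : A) (n : ℕ) :
    qPochhammer a q (2 * n) = qPochhammer a (q ^ 2) n * qPochhammer (a * q) (q ^ 2) n := by
  induction n with
  | zero => simp
  | succ n ih =>
    rw [show 2 * (n + 1) = 2 * n + 1 + 1 by ring, qPochhammer_succ, qPochhammer_succ, ih,
      qPochhammer_succ, qPochhammer_succ]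
    ring

lemma qPochhammer_mul_qPochhammer_neg (a q : A) (n : ℕ) :
    qPochhammer a q n * qPochhammer (-a) q n = qPochhammer (a ^ 2) (q ^ 2) n := by
  simp only [qPochhammer, ← prod_mul_distrib]
  exact prod_congr rfl fun i _ ↦ by ring

lemma pow_dvd_qPochhammer_self_sub (q : A) {a b : ℕ} (h : a ≤ b) :
    q ^ (a + 1) ∣ qPochhammer q q b - qPochhammer q q a := by
  induction b, h using Nat.le_induction with
  | base => simp
  | succ b hab ih =>
    rw [qPochhammer_succ, show ∀ x y : A, x * (1 - q * q ^ b) - y = (x - y) - q ^ (b + 1) * x by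
      intros; ring]
    exact dvd_sub ih (dvd_mul_of_dvd_left (pow_dvd_pow q (by omega)) _)

lemma pow_min_dvd_qPochhammer_self_sub (q : A) (a b : ℕ) :
    q ^ (min a b + 1) ∣ qPochhammer q q a - qPochhammer q q b := by
  rcases le_total a b with h | h
  · rw [min_eq_left h, ← neg_sub]
    exact (pow_dvd_qPochhammer_self_sub q h).neg_right
  · rw [min_eq_right h]
    exact pow_dvd_qPochhammer_self_sub q h

variable (q : A)

/-- The Gaussian binomial `[m, k]_q`, zero unless `0 ≤ k ≤ m`; the `toNat` exponents are junk
only where the coefficient they multiply vanishes. -/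
def qBinomial : ℕ → ℤ → A
  | 0, k => if k = 0 then 1 else 0
  | m + 1, k => qBinomial m k + q ^ ((m : ℤ) + 1 - k).toNat * qBinomial m (k - 1)

lemma qBinomial_succ (m : ℕ) (k : ℤ) :
    qBinomial q (m + 1) k =
      qBinomial q m k + q ^ ((m : ℤ) + 1 - k).toNat * qBinomial q m (k - 1) :=
  rfl

lemma qBinomial_eq_zero {m : ℕ} {k : ℤ} (hk : k < 0 ∨ m < k) : qBinomial q m k = 0 := by
  induction m generalizing k with
  | zero => simp [qBinomial]; omega
  | succ m ih => rw [qBinomial_succ, ih (by omega), ih (by omega), mul_zero, add_zero]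

lemma qBinomial_mul_pow_congr {m : ℕ} {k : ℤ} {a b : ℕ} (h : 0 ≤ k → k ≤ m → a = b) :
    qBinomial q m k * q ^ a = qBinomial q m k * q ^ b := by
  by_cases hk : 0 ≤ k ∧ k ≤ m
  · rw [h hk.1 hk.2]
  · rw [qBinomial_eq_zero q (by omega), zero_mul, zero_mul]

@[simp]
lemma qBinomial_zero_right (m : ℕ) : qBinomial q m 0 = 1 := by
  induction m with
  | zero => rfl
  | succ m ih => rw [qBinomial_succ, ih, qBinomial_eq_zero q (by omega), mul_zero, add_zero]

@[simp]
lemma qBinomial_self (m : ℕ) : qBinomial q m m = 1 := by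
  induction m with
  | zero => rfl
  | succ m ih =>
    simp [qBinomial_succ, ih, qBinomial_eq_zero q (Or.inr (by omega : (m : ℤ) < m + 1))]

lemma qBinomial_succ' (m : ℕ) (k : ℤ) :
    qBinomial q (m + 1) k = q ^ k.toNat * qBinomial q m k + qBinomial q m (k - 1) := by
  induction m generalizing k with
  | zero =>
    simp only [qBinomial]
    split_ifs <;> simp_all
    obtain rfl : k = 1 := by omega
    simp
  | succ m ih =>
    have hpow :
        qBinomial q m (k - 1) * q ^ (((m + 1 : ℕ) : ℤ) + 1 - k).toNat * q ^ (k - 1).toNat =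
          qBinomial q m (k - 1) * q ^ k.toNat * q ^ ((m : ℤ) + 1 - k).toNat := by
      rw [mul_assoc, mul_assoc, ← pow_add, ← pow_add]
      exact qBinomial_mul_pow_congr q fun _ _ ↦ by omega
    conv_lhs => rw [qBinomial_succ, ih, ih]
    rw [qBinomial_succ q m k, qBinomial_succ q m (k - 1),
      show (m : ℤ) + 1 - (k - 1) = ((m + 1 : ℕ) : ℤ) + 1 - k by push_cast; ring]
    linear_combination hpow

lemma qBinomial_mul_qPochhammer {m k : ℕ} (hk : k ≤ m) :
    qBinomial q m k * qPochhammer q q k * qPochhammer q q (m - k) = qPochhammer q q m := by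
  induction m generalizing k with
  | zero =>
    obtain rfl : k = 0 := by omega
    simp
  | succ m ih =>
    rcases k with _ | i
    · simp
    obtain rfl | hi : i = m ∨ i < m := by omega
    · rw [qBinomial_self]
      simp
    obtain ⟨d, rfl⟩ : ∃ d, m = i + 1 + d := ⟨m - (i + 1), by omega⟩
    have h₁ := ih (k := i + 1) (by omega)
    have h₂ := ih (k := i) (by omega)
    rw [show i + 1 + d - (i + 1) = d by omega] at h₁
    rw [show i + 1 + d - i = d + 1 by omega, qPochhammer_succ] at h₂
    rw [show i + 1 + d + 1 - (i + 1) = d + 1 by omega, qBinomial_succ, qPochhammer_succ q q d,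
      qPochhammer_succ q q (i + 1 + d),
      show ((i + 1 + d : ℕ) : ℤ) + 1 - ((i + 1 : ℕ) : ℤ) = ((d + 1 : ℕ) : ℤ) by push_cast; ring,
      Int.toNat_natCast, show ((i + 1 : ℕ) : ℤ) - 1 = (i : ℕ) by push_cast; ring]
    linear_combination (1 - q * q ^ d) * h₁ + q ^ (d + 1) * (1 - q * q ^ i) * h₂ +
      q ^ (d + 1) * qBinomial q (i + 1 + d) i * qPochhammer q q d * (1 - q * q ^ d) *
        qPochhammer_succ q q i

lemma qBinomial_add_two (m : ℕ) (k : ℤ) :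
    qBinomial q (m + 2) k =
      q ^ k.toNat * qBinomial q m k + qBinomial q m (k - 1)
        + q ^ ((m : ℤ) + 2 - k).toNat * qBinomial q m (k - 1)
        + q ^ ((m : ℤ) + 2 - k).toNat * q ^ ((m : ℤ) + 2 - k).toNat *
          qBinomial q m (k - 2) := by
  rw [qBinomial_succ, qBinomial_succ', qBinomial_succ, show k - 1 - 1 = k - 2 by ring,
    show ((m + 1 : ℕ) : ℤ) + 1 - k = (m : ℤ) + 2 - k by push_cast; ring,
    show (m : ℤ) + 1 - (k - 1) = (m : ℤ) + 2 - k by ring]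
  ring

def gaussTerm (n : ℕ) (j : ℤ) : A :=
  (j.negOnePow : A) * q ^ (j ^ 2).toNat * qBinomial q (2 * n) (n + j)

lemma gaussTerm_succ (n : ℕ) (j : ℤ) :
    gaussTerm q (n + 1) j =
      gaussTerm q n j + gaussTerm q n j * q ^ ((n : ℤ) + 1 - j).toNat
        - gaussTerm q n (j + 1) * q ^ ((n : ℤ) + 1 - (j + 1)).toNat
        - q ^ (2 * n + 1) * gaussTerm q n (j - 1) := by
  have h₀ := sq_nonneg j
  have h₁ := sq_nonneg (j + 1)
  have h₂ := sq_nonneg (j - 1)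
  have e₁ : (j + 1) ^ 2 = j ^ 2 + 2 * j + 1 := by ring
  have e₂ : (j - 1) ^ 2 = j ^ 2 - 2 * j + 1 := by ring
  have hup :
      qBinomial q (2 * n) (n + j + 1) * (q ^ (j ^ 2).toNat * q ^ ((n : ℤ) + j + 1).toNat) =
      qBinomial q (2 * n) (n + j + 1) *
        (q ^ ((j + 1) ^ 2).toNat * q ^ ((n : ℤ) + 1 - (j + 1)).toNat) := by
    rw [← pow_add, ← pow_add]
    apply qBinomial_mul_pow_congr
    omega
  have hdown : qBinomial q (2 * n) (n + j - 1) *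
        (q ^ (j ^ 2).toNat * (q ^ ((n : ℤ) + 1 - j).toNat * q ^ ((n : ℤ) + 1 - j).toNat)) =
      qBinomial q (2 * n) (n + j - 1) * (q ^ (2 * n + 1) * q ^ ((j - 1) ^ 2).toNat) := by
    rw [← pow_add, ← pow_add, ← pow_add]
    apply qBinomial_mul_pow_congr
    omega
  simp only [gaussTerm]
  rw [show 2 * (n + 1) = 2 * n + 2 by ring, qBinomial_add_two,
    show ((n + 1 : ℕ) : ℤ) + j = n + j + 1 by push_cast; ring,
    show ((2 * n : ℕ) : ℤ) + 2 - (n + j + 1) = n + 1 - j by push_cast; ring,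
    show (n : ℤ) + j + 1 - 1 = n + j by ring, show (n : ℤ) + j + 1 - 2 = n + j - 1 by ring,
    show (n : ℤ) + (j - 1) = n + j - 1 by ring, show (n : ℤ) + (j + 1) = n + j + 1 by ring,
    Int.negOnePow_succ, Int.negOnePow_sub, Int.negOnePow_one]
  push_cast
  linear_combination (j.negOnePow : A) * hup + (j.negOnePow : A) * hdown

lemma gaussTerm_eq_zero {n : ℕ} {j : ℤ} (hj : j ∉ Icc (-(n : ℤ)) n) : gaussTerm q n j = 0 := by
  rw [gaussTerm, qBinomial_eq_zero q (by rw [mem_Icc] at hj; omega), mul_zero]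

noncomputable def finiteGaussSum (n : ℕ) : A := ∑ j ∈ Icc (-(n : ℤ)) n, gaussTerm q n j

/-- The middle terms of `gaussTerm_succ` telescope, and the last one is a shifted copy of the
sum. -/
lemma finiteGaussSum_succ (n : ℕ) :
    finiteGaussSum q (n + 1) = (1 - q ^ (2 * n + 1)) * finiteGaussSum q n := by
  have ht : ∀ j ∉ Icc (-(n : ℤ)) n, gaussTerm q n j = 0 := fun j hj ↦ gaussTerm_eq_zero q hj
  have hu : ∀ j ∉ Icc (-(n : ℤ)) n, gaussTerm q n j * q ^ ((n : ℤ) + 1 - j).toNat = 0 :=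
    fun j hj ↦ by rw [ht j hj, zero_mul]
  simp only [finiteGaussSum, gaussTerm_succ, sum_sub_distrib, sum_add_distrib, ← mul_sum]
  rw [sum_Icc_comp_add (fun j ↦ gaussTerm q n j * q ^ ((n : ℤ) + 1 - j).toNat),
    sum_Icc_comp_sub (gaussTerm q n)]
  rw [sum_Icc_eq_of_vanish ht (c := -((n + 1 : ℕ) : ℤ) - 1) (by omega) (by omega),
    sum_Icc_eq_of_vanish ht (c := -((n + 1 : ℕ) : ℤ)) (by omega) (by omega),
    sum_Icc_eq_of_vanish hu (c := -((n + 1 : ℕ) : ℤ) + 1) (by omega) (by omega),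
    sum_Icc_eq_of_vanish hu (c := -((n + 1 : ℕ) : ℤ)) (by omega) (by omega)]
  ring

lemma finiteGaussSum_eq_qPochhammer (n : ℕ) : finiteGaussSum q n = qPochhammer q (q ^ 2) n := by
  induction n with
  | zero => simp [finiteGaussSum, gaussTerm]
  | succ n ih =>
    rw [finiteGaussSum_succ, ih, qPochhammer_succ]
    ring

noncomputable def truncatedTheta (n : ℕ) : A :=
  ∑ j ∈ Icc (-(n : ℤ)) n, (j.negOnePow : A) * q ^ (j ^ 2).toNat

lemma truncatedTheta_eq (n : ℕ) :
    truncatedTheta q n = 1 - 2 * ∑ m ∈ range n, (-1) ^ m * q ^ ((m + 1) ^ 2) := by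
  induction n with
  | zero => simp [truncatedTheta]
  | succ n ih =>
    have hIcc : Icc (-((n + 1 : ℕ) : ℤ)) (n + 1 : ℕ) =
        insert (-(n + 1 : ℤ)) (insert ((n : ℤ) + 1) (Icc (-(n : ℤ)) n)) := by
      ext; simp only [mem_Icc, mem_insert]; omega
    have hsign : (((n : ℤ) + 1).negOnePow : A) = (-1) ^ (n + 1) := by
      exact_mod_cast Int.cast_negOnePow_natCast A (n + 1)
    have hsq : (((n : ℤ) + 1) ^ 2).toNat = (n + 1) ^ 2 := by
      rw [show ((n : ℤ) + 1) ^ 2 = ((n + 1) ^ 2 : ℕ) by push_cast; ring, Int.toNat_natCast]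
    rw [truncatedTheta, hIcc, sum_insert (by simp only [mem_insert, mem_Icc]; omega),
      sum_insert (by simp only [mem_Icc]; omega), ← truncatedTheta, ih, sum_range_succ,
      Int.negOnePow_neg, neg_sq, hsign, hsq, pow_succ]
    ring

lemma pow_dvd_qPochhammer_mul_sub {a b n : ℕ} (h : a + b = 2 * n) :
    q ^ (min a b + 1) ∣
      qPochhammer q q n * qPochhammer q q n - qPochhammer q q a * qPochhammer q q b := by
  rw [show ∀ x z w : A, x * x - z * w = (x - z) * x + z * (x - w) by intros; ring]
  exact dvd_add
    (dvd_mul_of_dvd_left ((pow_dvd_pow q (by omega : min a b + 1 ≤ min n a + 1)).trans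
      (pow_min_dvd_qPochhammer_self_sub q n a)) _)
    (dvd_mul_of_dvd_right ((pow_dvd_pow q (by omega : min a b + 1 ≤ min n b + 1)).trans
      (pow_min_dvd_qPochhammer_self_sub q n b)) _)

lemma pow_dvd_finiteGaussSum_mul_sub (n : ℕ) :
    q ^ (n + 1) ∣ finiteGaussSum q n * qPochhammer q q n * qPochhammer q q n
      - truncatedTheta q n * qPochhammer q q (2 * n) := by
  simp only [finiteGaussSum, truncatedTheta, sum_mul, ← sum_sub_distrib]
  refine dvd_sum fun j hj ↦ ?_
  rw [mem_Icc] at hj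
  obtain ⟨a, ha⟩ : ∃ a : ℕ, (a : ℤ) = n + j := ⟨(n + j).toNat, by omega⟩
  obtain ⟨b, hb⟩ : ∃ b : ℕ, (b : ℤ) = n - j := ⟨(n - j).toNat, by omega⟩
  have hab : a + b = 2 * n := by omega
  rw [← qBinomial_mul_qPochhammer q (show a ≤ 2 * n by omega), show 2 * n - a = b by omega,
    gaussTerm, ← ha, show ∀ s x y z w v : A,
      s * x * y * z * z - s * x * (y * w * v) = s * y * (x * (z * z - w * v)) by intros; ring]
  refine dvd_mul_of_dvd_right ?_ _
  have hj₁ := Int.le_self_sq j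
  have hj₂ := Int.le_self_sq (-j)
  rw [neg_sq] at hj₂
  calc q ^ (n + 1) ∣ q ^ ((j ^ 2).toNat + (min a b + 1)) := pow_dvd_pow q (by omega)
    _ ∣ _ := by
      rw [pow_add]
      exact mul_dvd_mul_left _ (pow_dvd_qPochhammer_mul_sub q hab)

end QAnalogues

namespace PowerSeries

lemma isUnit_qPochhammer {R : Type*} [CommRing R] {a : R⟦X⟧} (ha : constantCoeff a = 0)
    (q : R⟦X⟧) (n : ℕ) : IsUnit (qPochhammer a q n) := by
  rw [isUnit_iff_constantCoeff, qPochhammer, map_prod]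
  simp [ha]

lemma X_pow_dvd_qPochhammer_sub_truncatedTheta_mul {R : Type*} [CommRing R] (n : ℕ) :
    (X : R⟦X⟧) ^ (n + 1) ∣
      qPochhammer X X n - truncatedTheta X n * qPochhammer (-X) X n := by
  have h := pow_dvd_finiteGaussSum_mul_sub (X : R⟦X⟧) n
  rw [finiteGaussSum_eq_qPochhammer, qPochhammer_two_mul, ← pow_two,
    ← qPochhammer_mul_qPochhammer_neg,
    show ∀ s e p g : R⟦X⟧, s * e * e - g * (s * (e * p)) = s * e * (e - g * p) by
      intros; ring] at h
  exact ((isUnit_qPochhammer (by simp) _ n).mul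
    (isUnit_qPochhammer (by simp) _ n)).dvd_mul_left.mp h

variable {k : Type*} [Field k]

lemma prod_inv_eq_inv_prod {ι : Type*} (s : Finset ι) (f : ι → k⟦X⟧) :
    ∏ i ∈ s, (f i)⁻¹ = (∏ i ∈ s, f i)⁻¹ := by
  induction s using Finset.cons_induction with
  | empty => simp
  | cons i s hi ih => rw [prod_cons, prod_cons, ih, PowerSeries.mul_inv_rev, mul_comm]

lemma dvd_inv_sub_mul_inv {d u v w : k⟦X⟧} (hu : constantCoeff u ≠ 0) (hv : constantCoeff v ≠ 0)
    (h : d ∣ u - w * v) : d ∣ v⁻¹ - w * u⁻¹ := by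
  have hu' := PowerSeries.inv_mul_cancel u hu
  have hv' := PowerSeries.inv_mul_cancel v hv
  rw [show v⁻¹ - w * u⁻¹ = u⁻¹ * v⁻¹ * (u - w * v) by
    linear_combination -v⁻¹ * hu' + w * u⁻¹ * hv']
  exact h.mul_left _

end PowerSeries

/-- As formal power series in `q`,
`(1/2)·(∏_{n≥1} 1/(1−q^n) − ∏_{n≥1} 1/(1+q^n)) = (∑_{m≥1} (−1)^{m−1} q^{m²})·∏_{n≥1} 1/(1−q^n)`.
Stated coefficient-wise, via the stabilizing partial products/sums. -/
theorem odd_projector_trace (N : ℕ) :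
    PowerSeries.coeff (R := ℚ) N
      ((PowerSeries.C (R := ℚ) (1 / 2)) *
        (∏ n ∈ Finset.range (N + 1), (1 - (PowerSeries.X : PowerSeries ℚ) ^ (n + 1))⁻¹ -
         ∏ n ∈ Finset.range (N + 1), (1 + (PowerSeries.X : PowerSeries ℚ) ^ (n + 1))⁻¹)) =
    PowerSeries.coeff (R := ℚ) N
      ((∑ m ∈ Finset.range (N + 1), (-1 : PowerSeries ℚ) ^ m * PowerSeries.X ^ ((m + 1) ^ 2)) *
        ∏ n ∈ Finset.range (N + 1), (1 - (PowerSeries.X : PowerSeries ℚ) ^ (n + 1))⁻¹) := by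
  have hE :
      ∏ n ∈ range (N + 1), (1 - (X : ℚ⟦X⟧) ^ (n + 1))⁻¹ = (qPochhammer X X (N + 1))⁻¹ := by
    simp only [prod_inv_eq_inv_prod, qPochhammer, pow_succ']
  have hP :
      ∏ n ∈ range (N + 1), (1 + (X : ℚ⟦X⟧) ^ (n + 1))⁻¹ = (qPochhammer (-X) X (N + 1))⁻¹ := by
    simp only [prod_inv_eq_inv_prod, qPochhammer, pow_succ', neg_mul, sub_neg_eq_add]
  have hunit :
      ∀ {a : ℚ⟦X⟧}, constantCoeff a = 0 → constantCoeff (qPochhammer a X (N + 1)) ≠ 0 :=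
    fun ha ↦ (isUnit_iff_constantCoeff.mp (isUnit_qPochhammer ha X _)).ne_zero
  have key := dvd_inv_sub_mul_inv (hunit (by simp)) (hunit (by simp))
    (X_pow_dvd_qPochhammer_sub_truncatedTheta_mul (N + 1))
  rw [truncatedTheta_eq] at key
  have half : C (1 / 2 : ℚ) * 2 = 1 := by rw [← map_ofNat C 2, ← map_mul]; norm_num
  rw [hE, hP, ← sub_eq_zero, ← map_sub]
  refine X_pow_dvd_iff (n := N + 1 + 1).mp ?_ N (by omega)
  convert key.mul_left (-C (1 / 2 : ℚ)) using 2
  linear_combination (∑ m ∈ range (N + 1), (-1) ^ m * X ^ ((m + 1) ^ 2)) *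
    (qPochhammer X X (N + 1))⁻¹ * half
end

section
/- As formal power series in t, ∑_{n≥0} t^{n(n+1)/2} = ∏_{n≥1} (1−t^{2n})/(1−t^{2n−1}). -/
/-!
The homogeneous `q`-binomial theorem at `n = 2m`, `q = t⁴`, `y = t^{4m}`, `z = t³` becomes, after
cancelling `t^{6m²+m}`, the finite Jacobi triple product
`∑_{j=-m}^{m} [2m, m+j]_{t⁴} t^{j(2j+1)} = ∏_{i<2m} (1 + t^{2i+1})`,
and `j(2j+1)` runs exactly once over every triangular number `s(s+1)/2`, `s ≤ 2m`.
Multiplying by `(t⁴; t⁴)_m` turns `[2m, m+j]_{t⁴}` into `1` modulo `t^{4(m-|j|+1)}`, so modulo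
`t^{N+1}` (with `m = 2N`) the left side becomes `∑ t^{s(s+1)/2}`. On the right,
`1 + t^{2i+1} = (1 - t^{4i+2}) / (1 - t^{2i+1})` and
`(t⁴; t⁴)_m ∏_{i<m} (1 - t^{4i+2}) = ∏_{i<2m} (1 - t^{2i+2})`,
which gives `∏ (1 - t^{2n}) / (1 - t^{2n-1})` up to factors that are `1` modulo `t^{N+1}`.
-/

open PowerSeries Finset

theorem Nat.choose_two_succ (k : ℕ) : (k + 1).choose 2 = k.choose 2 + k := by
  rw [Nat.choose_succ_succ', Nat.choose_one_right, add_comm]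

theorem Nat.choose_two_mul_two_add_self (k : ℕ) : k.choose 2 * 2 + k = k * k := by
  induction k with
  | zero => rfl
  | succ k ih => rw [Nat.choose_succ_succ', Nat.choose_one_right]; linear_combination ih

theorem Finset.prod_range_two_mul {M : Type*} [CommMonoid M] (f : ℕ → M) (m : ℕ) :
    ∏ i ∈ range (2 * m), f i = ∏ i ∈ range m, (f (2 * i) * f (2 * i + 1)) := by
  induction m with
  | zero => simp
  | succ m ih => rw [mul_add, mul_one, prod_range_succ, prod_range_succ, ih, prod_range_succ,
      mul_assoc]

theorem Finset.sum_range_two_mul_add_one {M : Type*} [AddCommMonoid M] (f : ℕ → M) (m : ℕ) :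
    ∑ s ∈ range (2 * m + 1), f s =
      ∑ i ∈ range m, f (2 * i + 1) + ∑ j ∈ range (m + 1), f (2 * j) := by
  induction m with
  | zero => simp
  | succ m ih =>
    rw [show 2 * (m + 1) + 1 = 2 * m + 1 + 1 + 1 by ring, sum_range_succ, sum_range_succ, ih,
      sum_range_succ (fun i => f (2 * i + 1)), sum_range_succ (fun j => f (2 * j)) (m + 1),
      show 2 * (m + 1) = 2 * m + 1 + 1 by ring]
    abel

section QBinomial

variable {R : Type*} [CommRing R] (q : R)

/-- The Gaussian binomial coefficient `[n, k]_q`. -/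
def qBinom : ℕ → ℕ → R
  | _, 0 => 1
  | 0, _ + 1 => 0
  | n + 1, k + 1 => q ^ (k + 1) * qBinom n (k + 1) + qBinom n k

/-- The `q`-Pochhammer symbol `(q; q)_n`. -/
def qPoch (n : ℕ) : R := ∏ i ∈ range n, (1 - q ^ (i + 1))

@[simp] theorem qBinom_zero_right (n : ℕ) : qBinom q n 0 = 1 := by cases n <;> rfl

theorem qBinom_succ_succ (n k : ℕ) :
    qBinom q (n + 1) (k + 1) = q ^ (k + 1) * qBinom q n (k + 1) + qBinom q n k := rfl

theorem qBinom_eq_zero_of_lt : ∀ {n k : ℕ}, n < k → qBinom q n k = 0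
  | 0, _ + 1, _ => rfl
  | n + 1, k + 1, h => by
    rw [qBinom_succ_succ, qBinom_eq_zero_of_lt (by omega), qBinom_eq_zero_of_lt (by omega),
      mul_zero, add_zero]

@[simp] theorem qBinom_self : ∀ n : ℕ, qBinom q n n = 1
  | 0 => rfl
  | n + 1 => by rw [qBinom_succ_succ, qBinom_eq_zero_of_lt q n.lt_succ_self, qBinom_self n,
      mul_zero, zero_add]

@[simp] theorem qPoch_zero : qPoch q 0 = 1 := prod_range_zero _

theorem qPoch_succ (n : ℕ) : qPoch q (n + 1) = qPoch q n * (1 - q ^ (n + 1)) :=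
  prod_range_succ _ n

theorem qPoch_add (m n : ℕ) :
    qPoch q (m + n) = qPoch q m * ∏ i ∈ range n, (1 - q ^ (m + i + 1)) :=
  prod_range_add _ m n

theorem qPoch_mul_qPoch_mul_qBinom : ∀ {n k : ℕ}, k ≤ n →
    qPoch q k * qPoch q (n - k) * qBinom q n k = qPoch q n
  | n, 0, _ => by simp
  | n + 1, k + 1, hk => by
    obtain rfl | hlt : k = n ∨ k < n := by omega
    · simp
    obtain ⟨d, rfl⟩ : ∃ d, n = k + 1 + d := ⟨n - (k + 1), by omega⟩
    have h₁ := qPoch_mul_qPoch_mul_qBinom (n := k + 1 + d) (k := k + 1) (by omega)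
    have h₂ := qPoch_mul_qPoch_mul_qBinom (n := k + 1 + d) (k := k) (by omega)
    rw [show k + 1 + d - (k + 1) = d by omega, qPoch_succ q k] at h₁
    rw [show k + 1 + d - k = d + 1 by omega, qPoch_succ q d] at h₂
    rw [show k + 1 + d + 1 - (k + 1) = d + 1 by omega, qBinom_succ_succ, qPoch_succ q k,
      qPoch_succ q d, qPoch_succ q (k + 1 + d)]
    have hpow : q ^ (d + 1) * q ^ (k + 1) = q ^ (k + 1 + d + 1) := by ring
    linear_combination (1 - q ^ (d + 1)) * q ^ (k + 1) * h₁ + (1 - q ^ (k + 1)) * h₂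
      - qPoch q (k + 1 + d) * hpow

theorem prod_add_mul_pow_eq_sum_qBinom (y z : R) (n : ℕ) :
    ∏ i ∈ range n, (y + z * q ^ i) =
      ∑ k ∈ range (n + 1), q ^ k.choose 2 * qBinom q n k * z ^ k * y ^ (n - k) := by
  induction n generalizing z with
  | zero => simp
  | succ n ih =>
    set A := ∑ k ∈ range (n + 1), q ^ k.choose 2 * qBinom q n k * (z * q) ^ k * y ^ (n - k)
      with hA
    have hprod : ∏ i ∈ range (n + 1), (y + z * q ^ i) = A * (y + z) := by
      rw [prod_range_succ', hA, ← ih, pow_zero, mul_one]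
      exact congrArg (· * _) (prod_congr rfl fun i _ => by ring)
    have hz : A * z = ∑ k ∈ range (n + 1),
        q ^ (k + 1).choose 2 * qBinom q n k * z ^ (k + 1) * y ^ (n - k) := by
      rw [sum_mul]
      refine sum_congr rfl fun k _ => ?_
      rw [Nat.choose_two_succ]
      ring
    have hy : A * y = ∑ k ∈ range (n + 1),
        q ^ (k + 1).choose 2 * (q ^ (k + 1) * qBinom q n (k + 1)) * z ^ (k + 1) * y ^ (n - k)
          + y ^ (n + 1) := by
      rw [sum_range_succ, qBinom_eq_zero_of_lt q n.lt_succ_self, hA, sum_range_succ', add_mul,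
        sum_mul]
      simp only [mul_zero, zero_mul, add_zero, qBinom_zero_right, Nat.choose_zero_succ,
        pow_zero, mul_one, one_mul, Nat.sub_zero, ← pow_succ]
      congr 1
      refine sum_congr rfl fun k hk => ?_
      rw [mem_range] at hk
      rw [show n - k = n - (k + 1) + 1 by omega]
      ring
    rw [hprod, sum_range_succ', mul_add, hy, hz]
    simp only [qBinom_succ_succ, qBinom_zero_right, Nat.choose_zero_succ, pow_zero, one_mul,
      Nat.sub_zero, Nat.add_sub_add_right, mul_add, add_mul, sum_add_distrib]
    ring

theorem pow_succ_dvd_qPoch_mul_qBinom_sub_one {r m n k : ℕ} (hk : k ≤ n) (hrk : r ≤ k)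
    (hrn : r ≤ n - k) (hrm : r ≤ m) : q ^ (r + 1) ∣ qPoch q m * qBinom q n k - 1 := by
  -- Modulo `q ^ (r + 1)` every `(q; q)_j` with `r ≤ j` equals the unit `(q; q)_r`, so
  -- `(q; q)_k (q; q)_{n-k} [n, k] = (q; q)_n` reduces to `(q; q)_r [n, k] = 1`.
  set π := Ideal.Quotient.mk (Ideal.span {q ^ (r + 1)})
  have hq : π (q ^ (r + 1)) = 0 := (Ideal.Quotient.eq_zero_iff_dvd _ _).2 dvd_rfl
  have hstable : ∀ j, r ≤ j → π (qPoch q j) = π (qPoch q r) := by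
    intro j hj
    obtain ⟨d, rfl⟩ := Nat.exists_eq_add_of_le hj
    rw [qPoch_add, map_mul, map_prod, prod_eq_one, mul_one]
    intro i _
    rw [map_sub, map_one, add_right_comm, pow_add q (r + 1), map_mul, hq, zero_mul, sub_zero]
  have hunit : IsUnit (π (qPoch q r)) := by
    rw [qPoch, map_prod, IsUnit.prod_iff]
    intro i _
    rw [map_sub, map_one, map_pow]
    exact (IsNilpotent.pow_succ i ⟨r + 1, by rw [← map_pow, hq]⟩).isUnit_one_sub
  have hbinom : π (qPoch q r) * π (qBinom q n k) = 1 := by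
    have key := congrArg π (qPoch_mul_qPoch_mul_qBinom q hk)
    rw [map_mul, map_mul, hstable k hrk, hstable (n - k) hrn, hstable n (hrk.trans hk)] at key
    exact hunit.mul_left_cancel (by rw [← mul_assoc, key, mul_one])
  rw [← Ideal.mem_span_singleton, ← Ideal.Quotient.eq, map_mul, hstable m hrm, hbinom, map_one]

end QBinomial

section

variable {R : Type*} [CommRing R]

theorem prod_X_pow_add_X_three_mul_X_four_pow (m : ℕ) :
    ∏ i ∈ range (2 * m), (X ^ (4 * m) + X ^ 3 * (X ^ 4) ^ i : R⟦X⟧) =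
      X ^ (6 * m ^ 2 + m) * ∏ i ∈ range (2 * m), (1 + X ^ (2 * i + 1)) := by
  have hexp : ∑ i ∈ range m, (4 * i + 3) = 2 * m ^ 2 + m := by
    induction m with
    | zero => rfl
    | succ m ih => rw [sum_range_succ, ih]; ring
  have hlow : ∀ i ∈ range m, (X ^ (4 * m) + X ^ 3 * (X ^ 4) ^ i : R⟦X⟧) =
      X ^ (4 * i + 3) * (1 + X ^ (4 * (m - 1 - i) + 1)) := by
    intro i hi
    rw [mem_range] at hi
    rw [show 4 * m = (4 * i + 3) + (4 * (m - 1 - i) + 1) by omega]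
    ring
  have hhigh : ∀ i ∈ range m, (X ^ (4 * m) + X ^ 3 * (X ^ 4) ^ (m + i) : R⟦X⟧) =
      X ^ (4 * m) * (1 + X ^ (4 * i + 3)) := fun i _ => by ring
  rw [two_mul, prod_range_add, prod_congr rfl hlow, prod_congr rfl hhigh, prod_mul_distrib,
    prod_mul_distrib, prod_pow_eq_pow_sum, hexp, prod_const, card_range,
    prod_range_reflect (fun i => (1 + X ^ (4 * i + 1) : R⟦X⟧)), ← two_mul,
    prod_range_two_mul (fun i => (1 + X ^ (2 * i + 1) : R⟦X⟧)), prod_mul_distrib]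
  simp only [show ∀ i, 2 * (2 * i) + 1 = 4 * i + 1 by omega,
    show ∀ i, 2 * (2 * i + 1) + 1 = 4 * i + 3 by omega]
  ring

theorem sum_qBinom_mul_X_pow_eq_prod_one_add_X_pow (m : ℕ) :
    ∑ i ∈ range m, qBinom (X ^ 4 : R⟦X⟧) (2 * m) (m - 1 - i) * X ^ ((i + 1) * (2 * i + 1)) +
      ∑ j ∈ range (m + 1), qBinom (X ^ 4 : R⟦X⟧) (2 * m) (m + j) * X ^ (j * (2 * j + 1)) =
    ∏ i ∈ range (2 * m), (1 + X ^ (2 * i + 1)) := by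
  set g : ℕ → R⟦X⟧ := fun k =>
    (X ^ 4) ^ k.choose 2 * qBinom (X ^ 4) (2 * m) k * (X ^ 3) ^ k * (X ^ (4 * m)) ^ (2 * m - k)
  have hg : ∀ k e, 4 * k.choose 2 + 3 * k + 4 * m * (2 * m - k) = 6 * m ^ 2 + m + e →
      g k = X ^ (6 * m ^ 2 + m) * (qBinom (X ^ 4) (2 * m) k * X ^ e) := by
    intro k e h
    rw [mul_left_comm, ← pow_add, ← h]
    ring
  apply X_pow_mul_injective (k := 6 * m ^ 2 + m)
  calc X ^ (6 * m ^ 2 + m) * (_ + _)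
      = ∑ i ∈ range m, g (m - 1 - i) + ∑ j ∈ range (m + 1), g (m + j) := by
        rw [mul_add, mul_sum, mul_sum]
        congr 1 <;> refine sum_congr rfl fun i hi => (hg _ _ ?_).symm <;> rw [mem_range] at hi
        · obtain ⟨e, rfl⟩ : ∃ e, m = i + 1 + e := ⟨m - (i + 1), by omega⟩
          have hc := Nat.choose_two_mul_two_add_self e
          rw [show i + 1 + e - 1 - i = e by omega,
            show 2 * (i + 1 + e) - e = 2 * i + 2 + e by omega]
          linear_combination 2 * hc
        · obtain ⟨e, rfl⟩ : ∃ e, m = i + e := ⟨m - i, by omega⟩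
          have hc := Nat.choose_two_mul_two_add_self (i + e + i)
          rw [show 2 * (i + e) - (i + e + i) = e by omega]
          linear_combination 2 * hc
    _ = ∑ k ∈ range (2 * m + 1), g k := by
        rw [sum_range_reflect g m, ← sum_range_add, two_mul, add_assoc]
    _ = ∏ i ∈ range (2 * m), (X ^ (4 * m) + X ^ 3 * (X ^ 4) ^ i) :=
        (prod_add_mul_pow_eq_sum_qBinom _ _ _ _).symm
    _ = X ^ (6 * m ^ 2 + m) * ∏ i ∈ range (2 * m), (1 + X ^ (2 * i + 1)) :=
        prod_X_pow_add_X_three_mul_X_four_pow m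

theorem sum_X_pow_triangle_range_two_mul_add_one (m : ℕ) :
    ∑ s ∈ range (2 * m + 1), (X : R⟦X⟧) ^ (s * (s + 1) / 2) =
      ∑ i ∈ range m, X ^ ((i + 1) * (2 * i + 1)) +
        ∑ j ∈ range (m + 1), X ^ (j * (2 * j + 1)) := by
  rw [sum_range_two_mul_add_one]
  congr 1 <;> refine sum_congr rfl fun i _ => congrArg _ ?_
  · rw [show (2 * i + 1) * (2 * i + 1 + 1) = 2 * ((i + 1) * (2 * i + 1)) by ring,
      Nat.mul_div_cancel_left _ two_pos]
  · rw [mul_assoc, Nat.mul_div_cancel_left _ two_pos]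

end

section

variable {R : Type*} [CommRing R] (N : ℕ)

local notation "π" => Ideal.Quotient.mk (Ideal.span {(X : R⟦X⟧) ^ (N + 1)})

theorem coeff_eq_of_mk_eq {f g : R⟦X⟧} (h : π f = π g) : coeff N f = coeff N g := by
  rw [Ideal.Quotient.eq, Ideal.mem_span_singleton, X_pow_dvd_iff] at h
  simpa [sub_eq_zero] using h N (lt_add_one N)

variable {N}

theorem mk_X_pow_eq_zero {e : ℕ} (he : N + 1 ≤ e) : π (X ^ e) = 0 :=
  (Ideal.Quotient.eq_zero_iff_dvd _ _).2 (pow_dvd_pow X he)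

theorem mk_one_sub_X_pow {e : ℕ} (he : N + 1 ≤ e) : π (1 - X ^ e) = 1 := by
  rw [map_sub, map_one, mk_X_pow_eq_zero he, sub_zero]

theorem mk_qPoch_mul_qBinom {m n k : ℕ} (hk : k ≤ n) (hNk : N ≤ k) (hNn : N ≤ n - k)
    (hNm : N ≤ m) : π (qPoch (X ^ 4) m * qBinom (X ^ 4) n k) = 1 := by
  rw [← map_one π, Ideal.Quotient.eq, Ideal.mem_span_singleton]
  refine (pow_dvd_pow X (by omega : N + 1 ≤ 4 * (N + 1))).trans ?_
  rw [pow_mul]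
  exact pow_succ_dvd_qPoch_mul_qBinom_sub_one _ hk hNk hNn hNm

theorem mk_qPoch_mul_qBinom_mul_X_pow {m n k e : ℕ} (hk : k ≤ n)
    (h : e ≤ N → N ≤ k ∧ N ≤ n - k ∧ N ≤ m) :
    π (qPoch (X ^ 4) m * (qBinom (X ^ 4) n k * X ^ e)) = π (X ^ e) := by
  by_cases he : e ≤ N
  · obtain ⟨hNk, hNn, hNm⟩ := h he
    rw [← mul_assoc, map_mul, mk_qPoch_mul_qBinom hk hNk hNn hNm, one_mul]
  · rw [map_mul, map_mul, mk_X_pow_eq_zero (by omega), mul_zero, mul_zero]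

theorem mk_qPoch_mul_sum_qBinom_mul_X_pow {m : ℕ} (hm : 2 * N ≤ m) :
    π (qPoch (X ^ 4) m *
      (∑ i ∈ range m, qBinom (X ^ 4) (2 * m) (m - 1 - i) * X ^ ((i + 1) * (2 * i + 1)) +
        ∑ j ∈ range (m + 1), qBinom (X ^ 4) (2 * m) (m + j) * X ^ (j * (2 * j + 1)))) =
    π (∑ i ∈ range m, X ^ ((i + 1) * (2 * i + 1)) +
      ∑ j ∈ range (m + 1), X ^ (j * (2 * j + 1))) := by
  simp only [mul_add, mul_sum, map_add, map_sum]
  congr 1 <;> refine sum_congr rfl fun i hi => ?_ <;> rw [mem_range] at hi <;>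
    refine mk_qPoch_mul_qBinom_mul_X_pow (by omega) fun he => ?_
  · have : i + 1 ≤ (i + 1) * (2 * i + 1) := Nat.le_mul_of_pos_right _ (by omega)
    omega
  · have : i ≤ i * (2 * i + 1) := Nat.le_mul_of_pos_right _ (by omega)
    omega

end

section

variable {K : Type*} [Field K]

theorem one_add_X_pow_eq_mul_inv (e : ℕ) :
    (1 + X ^ (e + 1) : K⟦X⟧) = (1 - X ^ (2 * (e + 1))) * (1 - X ^ (e + 1))⁻¹ := by
  have h := PowerSeries.mul_inv_cancel (1 - X ^ (e + 1) : K⟦X⟧) (by simp)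
  linear_combination -(1 + X ^ (e + 1) : K⟦X⟧) * h

theorem qPoch_mul_prod_one_add_X_pow (m : ℕ) :
    qPoch (X ^ 4 : K⟦X⟧) m * ∏ i ∈ range (2 * m), (1 + X ^ (2 * i + 1)) =
      (∏ i ∈ range (2 * m), ((1 - X ^ (2 * i + 2)) * (1 - X ^ (2 * i + 1))⁻¹)) *
        ∏ i ∈ range m, (1 - X ^ (4 * (m + i) + 2)) := by
  have hodd : ∏ i ∈ range (2 * m), (1 + X ^ (2 * i + 1) : K⟦X⟧) =
      (∏ i ∈ range (2 * m), (1 - X ^ (4 * i + 2))) *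
        ∏ i ∈ range (2 * m), (1 - X ^ (2 * i + 1))⁻¹ := by
    rw [← prod_mul_distrib]
    refine prod_congr rfl fun i _ => ?_
    rw [one_add_X_pow_eq_mul_inv, show 2 * (2 * i + 1) = 4 * i + 2 by ring]
  have hsplit : ∏ i ∈ range (2 * m), (1 - X ^ (4 * i + 2) : K⟦X⟧) =
      (∏ i ∈ range m, (1 - X ^ (4 * i + 2))) *
        ∏ i ∈ range m, (1 - X ^ (4 * (m + i) + 2)) := by
    rw [two_mul, prod_range_add]
  have heven : qPoch (X ^ 4 : K⟦X⟧) m * ∏ i ∈ range m, (1 - X ^ (4 * i + 2)) =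
      ∏ i ∈ range (2 * m), (1 - X ^ (2 * i + 2)) := by
    rw [qPoch, ← prod_mul_distrib, prod_range_two_mul]
    refine prod_congr rfl fun i _ => ?_
    ring
  rw [hodd, hsplit, prod_mul_distrib, ← heven]
  ring

variable {N : ℕ}

local notation "π" => Ideal.Quotient.mk (Ideal.span {(X : K⟦X⟧) ^ (N + 1)})

theorem mk_inv_one_sub_X_pow {e : ℕ} (he : N + 1 ≤ e) : π ((1 - X ^ e)⁻¹) = 1 := by
  have h := congrArg π (PowerSeries.mul_inv_cancel (1 - X ^ e : K⟦X⟧)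
    (by simp [zero_pow (by omega : e ≠ 0)]))
  rwa [map_mul, mk_one_sub_X_pow he, one_mul, map_one] at h

theorem mk_qPoch_mul_prod_one_add_X_pow {m : ℕ} (hm : N ≤ 2 * m) :
    π (qPoch (X ^ 4) m * ∏ i ∈ range (2 * m), (1 + X ^ (2 * i + 1))) =
      π (∏ i ∈ range (N + 1), ((1 - X ^ (2 * i + 2)) * (1 - X ^ (2 * i + 1))⁻¹)) := by
  have htrunc : ∀ a, N ≤ a →
      π (∏ i ∈ range a, ((1 - X ^ (2 * i + 2)) * (1 - X ^ (2 * i + 1))⁻¹)) =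
      π (∏ i ∈ range N, ((1 - X ^ (2 * i + 2)) * (1 - X ^ (2 * i + 1))⁻¹)) := by
    intro a ha
    rw [map_prod, map_prod]
    refine (prod_subset (range_subset_range.2 ha) fun i _ hi => ?_).symm
    rw [mem_range, not_lt] at hi
    rw [map_mul, mk_one_sub_X_pow (by omega), mk_inv_one_sub_X_pow (by omega), one_mul]
  have htail : π (∏ i ∈ range m, (1 - X ^ (4 * (m + i) + 2))) = 1 := by
    rw [map_prod]
    exact prod_eq_one fun i _ => mk_one_sub_X_pow (by omega)
  rw [qPoch_mul_prod_one_add_X_pow, map_mul, htail, mul_one, htrunc _ hm, htrunc _ N.le_succ]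

end

/-- **Gauss triangular-number identity**: as formal power series in `t`,
`∑_{n≥0} t^{n(n+1)/2} = ∏_{n≥1} (1−t^{2n})/(1−t^{2n−1})`.
Stated coefficient-wise via stabilizing partial sums/products. -/
theorem gauss_triangular (N : ℕ) :
    PowerSeries.coeff (R := ℚ) N
      (∑ n ∈ Finset.range (N + 1), (PowerSeries.X : PowerSeries ℚ) ^ (n * (n + 1) / 2)) =
    PowerSeries.coeff (R := ℚ) N
      (∏ n ∈ Finset.range (N + 1),
        ((1 - (PowerSeries.X : PowerSeries ℚ) ^ (2 * (n + 1))) *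
          (1 - (PowerSeries.X : PowerSeries ℚ) ^ (2 * (n + 1) - 1))⁻¹)) := by
  have hfactor : ∀ n : ℕ,
      ((1 - X ^ (2 * (n + 1))) * (1 - X ^ (2 * (n + 1) - 1))⁻¹ : ℚ⟦X⟧) =
      (1 - X ^ (2 * n + 2)) * (1 - X ^ (2 * n + 1))⁻¹ := fun n => by
    rw [show 2 * (n + 1) - 1 = 2 * n + 1 by omega, mul_add, mul_one]
  apply coeff_eq_of_mk_eq
  rw [prod_congr rfl fun n _ => hfactor n,
    ← mk_qPoch_mul_prod_one_add_X_pow (m := 2 * N) (by omega),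
    ← sum_qBinom_mul_X_pow_eq_prod_one_add_X_pow, mk_qPoch_mul_sum_qBinom_mul_X_pow le_rfl,
    ← sum_X_pow_triangle_range_two_mul_add_one, map_sum, map_sum]
  refine sum_subset (range_subset_range.2 (by omega)) fun s _ hs => mk_X_pow_eq_zero ?_
  rw [mem_range, not_lt] at hs
  rw [Nat.le_div_iff_mul_le two_pos]
  nlinarith
end
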